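/- For every integer R ≥ 2, the polynomial P̃_{R,R}(q) = -1 + Σ_{j=1}^{R-3} j q^(j+1) + (2R-1)q^(R-1) has a unique root q_*(R) in (0,1/2), is strictly negative on (0,q_*(R)) and strictly positive on (q_*(R),1/2]. Moreover q_*(R) is strictly increasing in R, and lim_{R→∞} q_*(R) = 1/2. -/
import Mathlib


noncomputable def Ptil (R : ℕ) (q : ℝ) : ℝ :=
  -1 + (∑ j ∈ Finset.Icc 1 (R-3), (j:ℝ)*q^(j+1)) + (2*(R:ℝ)-1)*q^(R-1)

open Filter

lemma ptil_cont (R : ℕ) : Continuous (Ptil R) := by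
  unfold Ptil
  fun_prop

lemma ptil_mono (R : ℕ) (hR : 2 ≤ R) : StrictMonoOn (Ptil R) (Set.Ici 0) := by
  intro a ha b hb hab
  simp only [Set.mem_Ici] at ha hb
  unfold Ptil
  have h1 : ∀ j ∈ Finset.Icc 1 (R-3), (j:ℝ)*a^(j+1) ≤ (j:ℝ)*b^(j+1) := fun j _ =>
    mul_le_mul_of_nonneg_left (pow_le_pow_left₀ ha hab.le _) (Nat.cast_nonneg j)
  have h2 : (2*(R:ℝ)-1)*a^(R-1) < (2*(R:ℝ)-1)*b^(R-1) := by
    have hc : (0:ℝ) < 2*(R:ℝ)-1 := by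
      have : (2:ℝ) ≤ (R:ℝ) := by exact_mod_cast hR
      linarith
    exact mul_lt_mul_of_pos_left (pow_lt_pow_left₀ hab ha (by omega)) hc
  have := Finset.sum_le_sum h1
  linarith

lemma ptil_zero (R : ℕ) (hR : 2 ≤ R) : Ptil R 0 = -1 := by
  unfold Ptil
  rw [Finset.sum_eq_zero, zero_pow (by omega)]
  · ring
  · intro j hj
    simp

lemma ptil_succ (R : ℕ) (hR : 2 ≤ R) (q : ℝ) :
    Ptil (R+1) q = Ptil R q + q^(R-1)*((2*(R:ℝ)+1)*q - ((R:ℝ)+1)) := by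
  obtain ⟨k, rfl⟩ : ∃ k, R = k + 2 := ⟨R - 2, by omega⟩
  cases k with
  | zero =>
    norm_num [Ptil]
    ring
  | succ m =>
    have h3 : (m+1+2+1) - 3 = m + 1 := by omega
    have h4 : (m+1+2) - 3 = m := by omega
    have h1 : (m+1+2) - 1 = m+2 := by omega
    have h2 : (m+1+2+1) - 1 = m+3 := by omega
    rw [Ptil, Ptil, h3, h4, h1, h2, Finset.sum_Icc_succ_top (by omega : 1 ≤ m+1)]
    push_cast
    ring

lemma ptil_half : ∀ R, 2 ≤ R → Ptil R (1/2) = (1/2:ℝ)^(R-1) := by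
  intro R
  induction R with
  | zero => omega
  | succ n ih =>
    intro h
    rcases eq_or_lt_of_le h with h2 | h2
    · have : n = 1 := by omega
      subst this
      norm_num [Ptil]
    · have hn : 2 ≤ n := by omega
      rw [ptil_succ n hn, ih hn]
      have e1 : n + 1 - 1 = n := by omega
      obtain ⟨k, rfl⟩ : ∃ k, n = k + 2 := ⟨n-2, by omega⟩
      have e2 : k + 2 - 1 = k + 1 := by omega
      rw [e1, e2]
      push_cast
      ring

lemma ptil_root (R : ℕ) (hR : 2 ≤ R) : ∃ q ∈ Set.Ioo (0:ℝ) (1/2), Ptil R q = 0 := by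
  have h := intermediate_value_Ioo (by norm_num : (0:ℝ) ≤ 1/2) (ptil_cont R).continuousOn
  have h0 : (0:ℝ) ∈ Set.Ioo (Ptil R 0) (Ptil R (1/2)) := by
    rw [ptil_zero R hR, ptil_half R hR]
    constructor
    · norm_num
    · positivity
  obtain ⟨q, hq, hq0⟩ := h h0
  exact ⟨q, hq, hq0⟩

noncomputable def qsF (R : ℕ) : ℝ := if h : 2 ≤ R then (ptil_root R h).choose else 0

lemma qsF_mem (R : ℕ) (hR : 2 ≤ R) : qsF R ∈ Set.Ioo (0:ℝ) (1/2) := by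
  rw [qsF, dif_pos hR]; exact (ptil_root R hR).choose_spec.1

lemma qsF_root (R : ℕ) (hR : 2 ≤ R) : Ptil R (qsF R) = 0 := by
  rw [qsF, dif_pos hR]; exact (ptil_root R hR).choose_spec.2

lemma qs_lt (R : ℕ) (hR : 2 ≤ R) : qsF R < qsF (R+1) := by
  have h1 := qsF_mem R hR
  have h2 := qsF_mem (R+1) (by omega)
  have hneg : Ptil (R+1) (qsF R) < 0 := by
    rw [ptil_succ R hR, qsF_root R hR, zero_add]
    apply mul_neg_of_pos_of_neg (pow_pos h1.1 _)
    have hR' : (2:ℝ) ≤ (R:ℝ) := by exact_mod_cast hR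
    nlinarith [mul_pos (by linarith : (0:ℝ) < 2*(R:ℝ)+1)
      (by linarith [h1.2] : (0:ℝ) < 1/2 - qsF R)]
  rw [← qsF_root (R+1) (by omega)] at hneg
  exact ((ptil_mono (R+1) (by omega)).lt_iff_lt (Set.mem_Ici.mpr h1.1.le)
    (Set.mem_Ici.mpr h2.1.le)).mp hneg

lemma ptil_eventually_neg (x : ℝ) (hx0 : 0 ≤ x) (hx : x < 1/2) :
    ∀ᶠ R in atTop, Ptil R x < 0 := by
  have hx1 : x < 1 := by linarith
  have hnorm : ‖x‖ < 1 := by rw [Real.norm_eq_abs, abs_lt]; constructor <;> linarith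
  have hsum : HasSum (fun j : ℕ => (j:ℝ) * x^(j+1)) (x*(x/(1-x)^2)) := by
    have h := (hasSum_coe_mul_geometric_of_norm_lt_one (𝕜 := ℝ) (r := x) hnorm).mul_left x
    have heq : (fun j : ℕ => x * ((j:ℝ) * x^j)) = fun j : ℕ => (j:ℝ) * x^(j+1) := by
      funext j; ring
    rwa [heq] at h
  set S : ℝ := x*(x/(1-x)^2) with hS
  have hb : ∀ n : ℕ, ∑ j ∈ Finset.Icc 1 n, (j:ℝ)*x^(j+1) ≤ S := fun n =>
    sum_le_hasSum (f := fun j : ℕ => (j:ℝ)*x^(j+1)) _ (fun j _ => by positivity) hsum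
  have hSlt : S < 1 := by
    have h1x : 0 < 1 - x := by linarith
    rw [hS]
    rw [show x*(x/(1-x)^2) = x^2/(1-x)^2 by ring]
    rw [div_lt_one (by positivity)]
    nlinarith
  -- tail tends to zero
  have hg : Tendsto (fun n : ℕ => (2*(n:ℝ)+1)*x^n) atTop (nhds 0) := by
    have h1 := (tendsto_self_mul_const_pow_of_lt_one hx0 hx1).const_mul 2
    have h2 := tendsto_pow_atTop_nhds_zero_of_lt_one hx0 hx1
    have := h1.add h2
    simp only [mul_zero, add_zero] at this
    refine this.congr (fun n => by ring)
  have htail : Tendsto (fun R : ℕ => (2*(R:ℝ)-1)*x^(R-1)) atTop (nhds 0) := by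
    have hcomp := hg.comp (tendsto_sub_atTop_nat 1)
    refine hcomp.congr' ?_
    filter_upwards [eventually_ge_atTop 1] with R hR
    have : ((R - 1 : ℕ) : ℝ) = (R:ℝ) - 1 := by
      rw [Nat.cast_sub hR]; norm_num
    simp only [Function.comp_apply, this]
    ring_nf
  have hev : ∀ᶠ R : ℕ in atTop, (2*(R:ℝ)-1)*x^(R-1) < 1 - S :=
    htail.eventually_lt_const (by linarith)
  filter_upwards [hev] with R hR
  have := hb (R - 3)
  unfold Ptil
  linarith

lemma qs_tendsto : Tendsto qsF atTop (nhds (1/2:ℝ)) := by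
  rw [tendsto_order]
  constructor
  · intro a ha
    set x := max a 0 with hxdef
    have hx0 : 0 ≤ x := le_max_right _ _
    have hx : x < 1/2 := max_lt ha (by norm_num)
    filter_upwards [ptil_eventually_neg x hx0 hx, eventually_ge_atTop 2] with R hneg hR
    have hmem := qsF_mem R hR
    have hlt : x < qsF R := by
      by_contra hc
      push_neg at hc
      have := (ptil_mono R hR).monotoneOn (Set.mem_Ici.mpr hmem.1.le)
        (Set.mem_Ici.mpr hx0) hc
      rw [qsF_root R hR] at this
      linarith
    exact lt_of_le_of_lt (le_max_left a 0) hlt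
  · intro b hb
    filter_upwards [eventually_ge_atTop 2] with R hR
    exact lt_trans (qsF_mem R hR).2 hb

theorem stmt14 :
    ∃ qs : ℕ → ℝ,
      (∀ R, 2 ≤ R →
        qs R ∈ Set.Ioo (0:ℝ) (1/2) ∧
        Ptil R (qs R) = 0 ∧
        (∀ q ∈ Set.Ioo (0:ℝ) (qs R), Ptil R q < 0) ∧
        (∀ q ∈ Set.Ioc (qs R) (1/2:ℝ), 0 < Ptil R q) ∧
        (∀ q ∈ Set.Ioo (0:ℝ) (1/2), Ptil R q = 0 → q = qs R)) ∧
      (∀ R, 2 ≤ R → qs R < qs (R+1)) ∧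
      Filter.Tendsto qs Filter.atTop (nhds (1/2)) := by
  refine ⟨qsF, fun R hR => ?_, qs_lt, qs_tendsto⟩
  have hmem := qsF_mem R hR
  have hroot := qsF_root R hR
  refine ⟨hmem, hroot, ?_, ?_, ?_⟩
  · intro q hq
    have := ptil_mono R hR (Set.mem_Ici.mpr hq.1.le) (Set.mem_Ici.mpr hmem.1.le) hq.2
    rwa [hroot] at this
  · intro q hq
    have := ptil_mono R hR (Set.mem_Ici.mpr hmem.1.le)
      (Set.mem_Ici.mpr (lt_trans hmem.1 hq.1).le) hq.1
    rwa [hroot] at this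
  · intro q hq hq0
    exact (ptil_mono R hR).injOn (Set.mem_Ici.mpr hq.1.le) (Set.mem_Ici.mpr hmem.1.le)
      (by rw [hq0, hroot])
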